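/- arXiv:1310.3164 — 4 statements merged into one kernel-verified Lean document; each statement's English description precedes it below -/
import Mathlib

section
/- Let D, D' ⊆ Φ⁺ be rook placements. Then Ω_D = Ω_{D'} if and only if D = D'. -/
/-- The set of positive roots of `A_{n-1}`, encoded as pairs `(i,j)` with `1 ≤ j < i ≤ n`. -/
def PhiPos (n : ℕ) : Finset (ℕ × ℕ) :=
  (Finset.Icc 1 n ×ˢ Finset.Icc 1 n).filter (fun p => p.2 < p.1)

/-- `D` is a rook placement: a subset of `Φ⁺` whose distinct elements never share
a row or a column. -/
def IsRP (n : ℕ) (D : Finset (ℕ × ℕ)) : Prop :=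
  D ⊆ PhiPos n ∧ ∀ p ∈ D, ∀ q ∈ D, p ≠ q → p.1 ≠ q.1 ∧ p.2 ≠ q.2
/-- Strictly lower-triangular part of a matrix. -/
def lowPart {n : ℕ} (X : Matrix (Fin n) (Fin n) ℂ) : Matrix (Fin n) (Fin n) ℂ :=
  Matrix.of fun i j => if (j : ℕ) < (i : ℕ) then X i j else 0

/-- Upper-triangular matrix (an element of `B` must moreover be invertible). -/
def IsUpperTri {n : ℕ} (b : Matrix (Fin n) (Fin n) ℂ) : Prop :=
  ∀ i j : Fin n, (j : ℕ) < (i : ℕ) → b i j = 0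

/-- Upper unitriangular matrix, i.e. an element of `U`. -/
def IsUnitri {n : ℕ} (u : Matrix (Fin n) (Fin n) ℂ) : Prop :=
  IsUpperTri u ∧ ∀ i, u i i = 1

/-- The matrix `f_D` of a rook placement: entry `1` at the (1-based) positions in `D`. -/
def fD (n : ℕ) (D : Finset (ℕ × ℕ)) : Matrix (Fin n) (Fin n) ℂ :=
  Matrix.of fun i j => if ((i : ℕ) + 1, (j : ℕ) + 1) ∈ D then 1 else 0

/-- The matrix `f_{D,ξ}`: entry `ξ(i,j)` at the (1-based) positions `(i,j) ∈ D`. -/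
def fDxi (n : ℕ) (D : Finset (ℕ × ℕ)) (ξ : ℕ × ℕ → ℂ) : Matrix (Fin n) (Fin n) ℂ :=
  Matrix.of fun i j =>
    if ((i : ℕ) + 1, (j : ℕ) + 1) ∈ D then ξ ((i : ℕ) + 1, (j : ℕ) + 1) else 0

/-- The coadjoint action `b.λ = (b λ b⁻¹)_low`. -/
noncomputable def coact {n : ℕ} (b l : Matrix (Fin n) (Fin n) ℂ) :
    Matrix (Fin n) (Fin n) ℂ := lowPart (b * l * b⁻¹)

/-- The `B`-orbit `Ω_D = B.f_D`. -/
noncomputable def Omega (n : ℕ) (D : Finset (ℕ × ℕ)) : Set (Matrix (Fin n) (Fin n) ℂ) :=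
  {l | ∃ b, IsUnit b ∧ IsUpperTri b ∧ l = coact b (fD n D)}

/-- The `U`-orbit `Θ_{D,ξ} = U.f_{D,ξ}`. -/
noncomputable def Theta (n : ℕ) (D : Finset (ℕ × ℕ)) (ξ : ℕ × ℕ → ℂ) :
    Set (Matrix (Fin n) (Fin n) ℂ) :=
  {l | ∃ u, IsUnitri u ∧ l = coact u (fDxi n D ξ)}

/-!
For `j < i` the block of rows `i, …, n` and columns `1, …, j` lies strictly below the diagonal,
so it is untouched by taking the lower part, and since its rows form an upper set and its columns
a lower set, multiplying by upper triangular matrices on either side cannot increase its rank.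
Hence the rank of this block is constant on `Ω_D`; at `f_D` it is the number of rooks of `D` in
the block, `N(i, j)`. These counts determine `D` by inclusion–exclusion:
`[(a, b) ∈ D] = N(a, b) - N(a + 1, b) - N(a, b - 1) + N(a + 1, b - 1)`.
-/

open Matrix

namespace Matrix

section Corner

variable {ι K : Type*} [Fintype ι] [DecidableEq ι] [Field K]

def projOn (s : Set ι) [DecidablePred (· ∈ s)] : Matrix ι ι K :=
  diagonal fun i => if i ∈ s then 1 else 0

def corner (s t : Set ι) [DecidablePred (· ∈ s)] [DecidablePred (· ∈ t)] (X : Matrix ι ι K) :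
    Matrix ι ι K :=
  projOn s * X * projOn t

variable (s t : Set ι) [DecidablePred (· ∈ s)] [DecidablePred (· ∈ t)]

lemma projOn_mul_apply (X : Matrix ι ι K) (i j : ι) :
    ((projOn s : Matrix ι ι K) * X) i j = if i ∈ s then X i j else 0 := by
  simp [projOn, diagonal_mul]

lemma mul_projOn_apply (X : Matrix ι ι K) (i j : ι) :
    (X * (projOn t : Matrix ι ι K)) i j = if j ∈ t then X i j else 0 := by
  simp [projOn, mul_diagonal]

lemma corner_apply (X : Matrix ι ι K) (i j : ι) :
    corner s t X i j = if i ∈ s ∧ j ∈ t then X i j else 0 := by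
  rw [corner, mul_projOn_apply, projOn_mul_apply]
  split_ifs <;> simp_all

variable {s t}

lemma projOn_mul_mul_projOn_of_isUpperSet [LinearOrder ι] {M : Matrix ι ι K}
    (hM : M.BlockTriangular id) (hs : IsUpperSet s) :
    projOn s * M * projOn s = projOn s * M := by
  ext i j
  rw [mul_projOn_apply, projOn_mul_apply]
  by_cases hj : j ∈ s
  · rw [if_pos hj]
  · by_cases hi : i ∈ s
    · have hji : j < i := lt_of_not_ge fun h => hj (hs h hi)
      simp [hi, hj, hM hji]
    · simp [hi, hj]

lemma projOn_mul_mul_projOn_of_isLowerSet [LinearOrder ι] {M : Matrix ι ι K}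
    (hM : M.BlockTriangular id) (ht : IsLowerSet t) :
    projOn t * M * projOn t = M * projOn t := by
  ext i j
  rw [mul_projOn_apply, projOn_mul_apply, mul_projOn_apply]
  by_cases hi : i ∈ t
  · rw [if_pos hi]
  · by_cases hj : j ∈ t
    · have hji : j < i := lt_of_not_ge fun h => hi (ht h hj)
      simp [hi, hj, hM hji]
    · simp [hj]

/-- `projOn s * A = projOn s * A * projOn s` and `C * projOn t = projOn t * C * projOn t`, so the
product factors through `corner s t X`. -/
lemma rank_corner_mul_mul_le [LinearOrder ι] {A C : Matrix ι ι K} (hA : A.BlockTriangular id)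
    (hC : C.BlockTriangular id) (hs : IsUpperSet s) (ht : IsLowerSet t) (X : Matrix ι ι K) :
    (corner s t (A * X * C)).rank ≤ (corner s t X).rank := by
  have hsplit : corner s t (A * X * C) = projOn s * A * corner s t X * (C * projOn t) := by
    calc corner s t (A * X * C)
        = projOn s * A * projOn s * X * (projOn t * C * projOn t) := by
          rw [projOn_mul_mul_projOn_of_isUpperSet hA hs,
            projOn_mul_mul_projOn_of_isLowerSet hC ht]
          simp only [corner, Matrix.mul_assoc]
      _ = _ := by simp only [corner, Matrix.mul_assoc]
  rw [hsplit]
  exact (rank_mul_le_left _ _).trans (rank_mul_le_right _ _)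

lemma rank_corner_conj [LinearOrder ι] {b : Matrix ι ι K} (hb : IsUnit b)
    (hbu : b.BlockTriangular id) (hs : IsUpperSet s) (ht : IsLowerSet t) (X : Matrix ι ι K) :
    (corner s t (b * X * b⁻¹)).rank = (corner s t X).rank := by
  have := hb.invertible
  have hbu' : b⁻¹.BlockTriangular id := blockTriangular_inv_of_blockTriangular hbu
  refine (rank_corner_mul_mul_le hbu hbu' hs ht X).antisymm ?_
  calc (corner s t X).rank = (corner s t (b⁻¹ * (b * X * b⁻¹) * b)).rank := by
        simp [Matrix.mul_assoc]
    _ ≤ _ := rank_corner_mul_mul_le hbu' hbu hs ht _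

end Corner

/-- `A * Aᵀ` is the diagonal projection onto the occupied rows, hence `A * Aᵀ * A = A`. -/
theorem rank_of_boole_of_rook {m n K : Type*} [Fintype m] [Fintype n] [DecidableEq m] [Field K]
    (R : m → n → Prop) [∀ i j, Decidable (R i j)]
    (hrow : ∀ i j j', R i j → R i j' → j = j') (hcol : ∀ i i' j, R i j → R i' j → i = i') :
    (of fun i j => if R i j then (1 : K) else 0).rank = Fintype.card {p : m × n // R p.1 p.2} := by
  classical
  set A : Matrix m n K := of fun i j => if R i j then 1 else 0
  set d : m → K := fun i => if ∃ j, R i j then 1 else 0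
  have hAAt : A * Aᵀ = diagonal d := by
    ext i i'
    rw [mul_apply]
    by_cases hii' : i = i'
    · subst hii'
      by_cases hi : ∃ j, R i j
      · obtain ⟨j, hj⟩ := hi
        have hrow' : ∀ j', j' ≠ j → ¬R i j' := fun j' hj' h => hj' (hrow _ _ _ hj h).symm
        rw [Finset.sum_eq_single j (fun j' _ hj' => by simp [A, hrow' j' hj']) (by simp)]
        simp [A, d, hj, Exists.intro j hj]
      · push Not at hi
        simp [A, d, hi]
    · rw [diagonal_apply_ne _ hii']
      refine Finset.sum_eq_zero fun j _ => ?_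
      by_cases h : R i j ∧ R i' j
      · exact absurd (hcol _ _ _ h.1 h.2) hii'
      · simp only [A, transpose_apply, of_apply]
        split_ifs <;> simp_all
  have hdA : diagonal d * A = A := by
    ext i j
    by_cases h : R i j
    · simp [A, d, diagonal_mul, h, Exists.intro j h]
    · simp [A, diagonal_mul, h]
  have hrank : A.rank = (diagonal d).rank := by
    refine le_antisymm ?_ (hAAt ▸ rank_mul_le_left _ _)
    calc A.rank = (A * Aᵀ * A).rank := by rw [hAAt, hdA]
      _ ≤ _ := hAAt ▸ rank_mul_le_left _ _
  rw [hrank, rank_diagonal]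
  refine (Fintype.card_of_bijective (f := fun p : {p : m × n // R p.1 p.2} =>
    (⟨p.1.1, by simp [d, Exists.intro p.1.2 p.2]⟩ : {i // d i ≠ 0})) ⟨?_, ?_⟩).symm
  · rintro ⟨⟨i, j⟩, h⟩ ⟨⟨i', j'⟩, h'⟩ heq
    simp only [Subtype.mk.injEq] at heq
    subst heq
    obtain rfl := hrow _ _ _ h h'
    rfl
  · rintro ⟨i, hi⟩
    obtain ⟨j, hj⟩ : ∃ j, R i j := by by_contra h; simp [d, h] at hi
    exact ⟨⟨(i, j), hj⟩, rfl⟩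

end Matrix

def cornerCount (D : Finset (ℕ × ℕ)) (i j : ℕ) : ℕ :=
  (D.filter fun p => i ≤ p.1 ∧ p.2 ≤ j).card

lemma cornerCount_add_cornerCount (D : Finset (ℕ × ℕ)) (a b : ℕ) (hb : 1 ≤ b) :
    cornerCount D a b + cornerCount D (a + 1) (b - 1) =
      cornerCount D (a + 1) b + cornerCount D a (b - 1) + if (a, b) ∈ D then 1 else 0 := by
  rw [← Finset.sum_ite_eq' D (a, b) fun _ => 1]
  simp only [cornerCount, Finset.card_filter, ← Finset.sum_add_distrib]
  refine Finset.sum_congr rfl fun p _ => ?_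
  obtain ⟨x, y⟩ := p
  simp only [Prod.mk.injEq]
  split_ifs <;> omega

lemma eq_of_cornerCount_eq {D D' : Finset (ℕ × ℕ)} (hD : ∀ p ∈ D, 1 ≤ p.2 ∧ p.2 < p.1)
    (hD' : ∀ p ∈ D', 1 ≤ p.2 ∧ p.2 < p.1)
    (h : ∀ i j, j < i → cornerCount D i j = cornerCount D' i j) : D = D' := by
  ext ⟨a, b⟩
  by_cases hab : 1 ≤ b ∧ b < a
  · have e := cornerCount_add_cornerCount D a b hab.1
    have e' := cornerCount_add_cornerCount D' a b hab.1
    rw [h a b hab.2, h (a + 1) (b - 1) (by omega), h (a + 1) b (by omega),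
      h a (b - 1) (by omega)] at e
    split_ifs at e e' <;> simp_all
  · exact iff_of_false (fun h => hab (hD _ h)) (fun h => hab (hD' _ h))

section RookPlacement

variable {n : ℕ}

lemma mem_PhiPos {p : ℕ × ℕ} :
    p ∈ PhiPos n ↔ (1 ≤ p.1 ∧ p.1 ≤ n) ∧ (1 ≤ p.2 ∧ p.2 ≤ n) ∧ p.2 < p.1 := by
  simp [PhiPos, and_assoc]

lemma IsRP.eq_of_fst_eq {D : Finset (ℕ × ℕ)} (hD : IsRP n D) {p q : ℕ × ℕ} (hp : p ∈ D)
    (hq : q ∈ D) (h : p.1 = q.1) : p = q :=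
  by_contra fun hpq => (hD.2 p hp q hq hpq).1 h

lemma IsRP.eq_of_snd_eq {D : Finset (ℕ × ℕ)} (hD : IsRP n D) {p q : ℕ × ℕ} (hp : p ∈ D)
    (hq : q ∈ D) (h : p.2 = q.2) : p = q :=
  by_contra fun hpq => (hD.2 p hp q hq hpq).2 h

lemma IsRP.forall_one_le_snd_lt_fst {D : Finset (ℕ × ℕ)} (hD : IsRP n D) :
    ∀ p ∈ D, 1 ≤ p.2 ∧ p.2 < p.1 := by
  intro p hp
  obtain ⟨-, ⟨hp2, -⟩, hp21⟩ := mem_PhiPos.mp (hD.1 hp)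
  exact ⟨hp2, hp21⟩

lemma lowPart_fD {D : Finset (ℕ × ℕ)} (hD : D ⊆ PhiPos n) : lowPart (fD n D) = fD n D := by
  ext r c
  by_cases h : ((r : ℕ) + 1, (c : ℕ) + 1) ∈ D
  · obtain ⟨-, -, hcr⟩ := mem_PhiPos.mp (hD h)
    have hcr' : c < r := Fin.lt_def.mpr (by simpa using hcr)
    simp [lowPart, fD, h, hcr']
  · simp [lowPart, fD, h]

lemma fD_mem_Omega {D : Finset (ℕ × ℕ)} (hD : D ⊆ PhiPos n) : fD n D ∈ Omega n D :=
  ⟨1, isUnit_one, fun _ _ h => one_apply_ne (by rintro rfl; exact lt_irrefl _ h), by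
    rw [coact, inv_one, Matrix.mul_one, Matrix.one_mul, lowPart_fD hD]⟩

/-- Rows `i, …, n` and columns `1, …, j`, in the paper's 1-based indexing. -/
noncomputable def lowerLeft (i j : ℕ) (X : Matrix (Fin n) (Fin n) ℂ) : Matrix (Fin n) (Fin n) ℂ :=
  corner {r | i ≤ (r : ℕ) + 1} {c | (c : ℕ) + 1 ≤ j} X

lemma lowerLeft_lowPart {i j : ℕ} (hji : j < i) (X : Matrix (Fin n) (Fin n) ℂ) :
    lowerLeft i j (lowPart X) = lowerLeft i j X := by
  ext r c
  simp only [lowerLeft, corner_apply, lowPart, of_apply, Set.mem_ofPred_eq]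
  split_ifs <;> first | rfl | omega

lemma rank_lowerLeft_coact {b : Matrix (Fin n) (Fin n) ℂ} (hb : IsUnit b) (hbu : IsUpperTri b)
    {i j : ℕ} (hji : j < i) (X : Matrix (Fin n) (Fin n) ℂ) :
    (lowerLeft i j (coact b X)).rank = (lowerLeft i j X).rank := by
  rw [coact, lowerLeft_lowPart hji]
  refine rank_corner_conj hb (fun r c h => hbu r c h) (fun r r' h hr => ?_) (fun c c' h hc => ?_) X
  · simp only [Set.mem_ofPred_eq, Fin.le_def] at h hr ⊢; omega
  · simp only [Set.mem_ofPred_eq, Fin.le_def] at h hc ⊢; omega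

lemma rank_lowerLeft_fD {D : Finset (ℕ × ℕ)} (hD : IsRP n D) (i j : ℕ) :
    (lowerLeft i j (fD n D)).rank = cornerCount D i j := by
  set R : Fin n → Fin n → Prop := fun r c => i ≤ (r : ℕ) + 1 ∧ (c : ℕ) + 1 ≤ j ∧
    ((r : ℕ) + 1, (c : ℕ) + 1) ∈ D
  have hcorner : lowerLeft i j (fD n D) = of fun r c => if R r c then 1 else 0 := by
    ext r c
    simp only [lowerLeft, corner_apply, fD, of_apply, Set.mem_ofPred_eq, R]
    split_ifs <;> first | rfl | tauto
  have hrow : ∀ r c c', R r c → R r c' → c = c' := fun r c c' h h' =>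
    Fin.ext (by simpa using congrArg Prod.snd (hD.eq_of_fst_eq h.2.2 h'.2.2 rfl))
  have hcol : ∀ r r' c, R r c → R r' c → r = r' := fun r r' c h h' =>
    Fin.ext (by simpa using congrArg Prod.fst (hD.eq_of_snd_eq h.2.2 h'.2.2 rfl))
  rw [hcorner, rank_of_boole_of_rook R hrow hcol, Fintype.card_subtype, cornerCount]
  refine Finset.card_nbij (fun p => ((p.1 : ℕ) + 1, (p.2 : ℕ) + 1)) ?_ ?_ ?_
  · intro p hp
    simp only [Finset.mem_coe, Finset.mem_filter, Finset.mem_univ, true_and, R] at hp ⊢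
    exact ⟨hp.2.2, hp.1, hp.2.1⟩
  · intro p _ q _ h
    simp only [Prod.mk.injEq, add_left_inj] at h
    exact Prod.ext (Fin.ext h.1) (Fin.ext h.2)
  · rintro ⟨a, b⟩ hab
    simp only [Finset.mem_coe, Finset.mem_filter] at hab
    obtain ⟨⟨ha, ha'⟩, ⟨hb, hb'⟩, -⟩ := mem_PhiPos.mp (hD.1 hab.1)
    refine ⟨(⟨a - 1, by omega⟩, ⟨b - 1, by omega⟩), ?_, ?_⟩
    · simp only [Finset.mem_coe, Finset.mem_filter, Finset.mem_univ, true_and, R]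
      refine ⟨by omega, by omega, ?_⟩
      convert hab.1 using 2 <;> omega
    · simp only [Prod.mk.injEq]; omega

lemma rank_lowerLeft_of_mem_Omega {D : Finset (ℕ × ℕ)} (hD : IsRP n D)
    {l : Matrix (Fin n) (Fin n) ℂ} (hl : l ∈ Omega n D) {i j : ℕ} (hji : j < i) :
    (lowerLeft i j l).rank = cornerCount D i j := by
  obtain ⟨b, hb, hbu, rfl⟩ := hl
  rw [rank_lowerLeft_coact hb hbu hji, rank_lowerLeft_fD hD]

end RookPlacement

/-- `Ω_D = Ω_{D'}` if and only if `D = D'`. -/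
theorem omega_eq_iff (n : ℕ) (D D' : Finset (ℕ × ℕ))
    (hD : IsRP n D) (hD' : IsRP n D') :
    Omega n D = Omega n D' ↔ D = D' := by
  refine ⟨fun h => ?_, fun h => h ▸ rfl⟩
  have hmem : fD n D ∈ Omega n D := fD_mem_Omega hD.1
  have hmem' : fD n D ∈ Omega n D' := h ▸ hmem
  refine eq_of_cornerCount_eq hD.forall_one_le_snd_lt_fst hD'.forall_one_le_snd_lt_fst
    fun i j hji => ?_
  rw [← rank_lowerLeft_of_mem_Omega hD hmem hji, rank_lowerLeft_of_mem_Omega hD' hmem' hji]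
end

section
/- Let D, D' ⊆ Φ⁺ be rook placements. If Ω_D is contained in the closure of Ω_{D'}, then σ_D ≤_B σ_{D'} in the Bruhat–Chevalley order on S_{2n−2}. -/
/-- The Kerov involution `σ_D ∈ S_{2n−2}` of a rook placement, as a function:
it exchanges `2i − 2` and `2j − 1` for every rook `(i,j) ∈ D` and fixes everything else. -/
noncomputable def kerov (D : Finset (ℕ × ℕ)) (a : ℕ) : ℕ :=
  if h : ∃ p ∈ D, a = 2 * p.1 - 2 then 2 * h.choose.2 - 1
  else if h' : ∃ p ∈ D, a = 2 * p.2 - 1 then 2 * h'.choose.1 - 2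
  else a

/-- The Bruhat–Chevalley order on permutations of `{1, …, N}`, via the standard
rank-matrix criterion. -/
def bruhatLE (N : ℕ) (σ τ : ℕ → ℕ) : Prop :=
  ∀ i ∈ Finset.Icc 1 N, ∀ j ∈ Finset.Icc 1 N,
    ((Finset.Icc 1 N).filter (fun a => a ≤ i ∧ j ≤ σ a)).card ≤
      ((Finset.Icc 1 N).filter (fun a => a ≤ i ∧ j ≤ τ a)).card


open Finset

namespace Matrix

variable {K m n κ : Type*} [Field K] [Fintype n] [Fintype κ] [DecidableEq κ]

theorem card_le_rank_of_det_submatrix_ne_zero (A : Matrix m n K) (ρ : κ → m) (γ : κ → n)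
    (h : (A.submatrix ρ γ).det ≠ 0) : Fintype.card κ ≤ A.rank := by
  rw [← rank_of_isUnit _ ((isUnit_iff_isUnit_det _).2 h.isUnit)]
  exact rank_submatrix_le A ρ γ

theorem card_le_of_mem_closure [TopologicalSpace K] [IsTopologicalRing K] [T1Space K]
    {S : Set (Matrix m n K)} {k : ℕ} (hS : ∀ Y ∈ S, Y.rank ≤ k) {A : Matrix m n K}
    (hA : A ∈ closure S) (ρ : κ → m) (γ : κ → n) (h : (A.submatrix ρ γ).det ≠ 0) :
    Fintype.card κ ≤ k := by
  have hopen : IsOpen {Y : Matrix m n K | (Y.submatrix ρ γ).det ≠ 0} :=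
    isOpen_ne_fun (continuous_id.matrix_submatrix ρ γ).matrix_det continuous_const
  obtain ⟨Y, hY, hYS⟩ := _root_.mem_closure_iff.1 hA _ hopen h
  exact (card_le_rank_of_det_submatrix_ne_zero Y ρ γ hY).trans (hS Y hYS)

end Matrix

lemma mem_PhiPos_iff {n : ℕ} {p : ℕ × ℕ} :
    p ∈ PhiPos n ↔ 1 ≤ p.2 ∧ p.2 < p.1 ∧ p.1 ≤ n := by
  simp only [PhiPos, mem_filter, mem_product, mem_Icc]
  omega

namespace IsRP

variable {n : ℕ} {D : Finset (ℕ × ℕ)}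

lemma bounds (hD : IsRP n D) {p : ℕ × ℕ} (hp : p ∈ D) : 1 ≤ p.2 ∧ p.2 < p.1 ∧ p.1 ≤ n :=
  mem_PhiPos_iff.1 (hD.1 hp)

lemma eq_of_fst_eq_s6 (hD : IsRP n D) {p q : ℕ × ℕ} (hp : p ∈ D) (hq : q ∈ D)
    (h : p.1 = q.1) : p = q := by
  by_contra hne
  exact (hD.2 p hp q hq hne).1 h

lemma eq_of_snd_eq_s6 (hD : IsRP n D) {p q : ℕ × ℕ} (hp : p ∈ D) (hq : q ∈ D)
    (h : p.2 = q.2) : p = q := by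
  by_contra hne
  exact (hD.2 p hp q hq hne).2 h

lemma mono {E : Finset (ℕ × ℕ)} (hD : IsRP n D) (hE : E ⊆ D) : IsRP n E :=
  ⟨hE.trans hD.1, fun p hp q hq => hD.2 p (hE hp) q (hE hq)⟩

lemma exists_submatrix_fD_eq_one (hD : IsRP n D) :
    ∃ ρ γ : D → Fin n, (fD n D).submatrix ρ γ = 1 := by
  refine ⟨fun p => ⟨p.1.1 - 1, by have := hD.bounds p.2; omega⟩,
    fun p => ⟨p.1.2 - 1, by have := hD.bounds p.2; omega⟩, ?_⟩
  ext p q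
  have hp := hD.bounds p.2
  have hq := hD.bounds q.2
  simp only [Matrix.submatrix_apply, fD, Matrix.of_apply, Matrix.one_apply]
  rw [Nat.sub_add_cancel (by omega : 1 ≤ p.1.1), Nat.sub_add_cancel hq.1]
  by_cases hpq : p = q
  · subst hpq
    simp
  · rw [if_neg hpq, if_neg]
    intro hmem
    exact hpq (Subtype.ext ((hD.eq_of_fst_eq_s6 hmem p.2 rfl).symm.trans
      (hD.eq_of_snd_eq_s6 hmem q.2 rfl)))

lemma lowPart_fD (hD : IsRP n D) : lowPart (fD n D) = fD n D := by
  ext i j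
  simp only [lowPart, fD, Matrix.of_apply]
  by_cases hmem : ((i : ℕ) + 1, (j : ℕ) + 1) ∈ D
  · have hji : (j : ℕ) + 1 < i + 1 := (hD.bounds hmem).2.1
    rw [if_pos (by omega)]
  · simp [hmem]

lemma fD_mem_Omega (hD : IsRP n D) : fD n D ∈ Omega n D :=
  ⟨1, isUnit_one, fun _ _ hij => Matrix.one_apply_ne (by omega), by
    rw [coact, inv_one, Matrix.one_mul, Matrix.mul_one, hD.lowPart_fD]⟩

end IsRP

section Corner

variable {n : ℕ}

lemma IsUpperTri.inv {b : Matrix (Fin n) (Fin n) ℂ} (hb : IsUpperTri b) : IsUpperTri b⁻¹ := by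
  by_cases hdet : IsUnit b.det
  · let := b.invertibleOfIsUnitDet hdet
    exact fun i j hij =>
      Matrix.blockTriangular_inv_of_blockTriangular (b := fun i : Fin n => (i : ℕ)) hb hij
  · rw [Matrix.nonsing_inv_apply_not_isUnit _ hdet]
    exact fun _ _ _ => rfl

def projRowsGE (n r : ℕ) : Matrix (Fin n) (Fin n) ℂ :=
  Matrix.diagonal fun i => if r ≤ (i : ℕ) + 1 then 1 else 0

def projColsLE (n c : ℕ) : Matrix (Fin n) (Fin n) ℂ :=
  Matrix.diagonal fun j => if (j : ℕ) + 1 ≤ c then 1 else 0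

def corner (r c : ℕ) (X : Matrix (Fin n) (Fin n) ℂ) : Matrix (Fin n) (Fin n) ℂ :=
  projRowsGE n r * X * projColsLE n c

lemma corner_apply (r c : ℕ) (X : Matrix (Fin n) (Fin n) ℂ) (i j : Fin n) :
    corner r c X i j = if r ≤ (i : ℕ) + 1 ∧ (j : ℕ) + 1 ≤ c then X i j else 0 := by
  simp only [corner, projRowsGE, projColsLE, Matrix.diagonal_mul, Matrix.mul_diagonal]
  split_ifs <;> simp_all

lemma continuous_corner (r c : ℕ) : Continuous (corner (n := n) r c) :=
  (continuous_const.matrix_mul continuous_id).matrix_mul continuous_const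

lemma projRowsGE_mul_of_isUpperTri (r : ℕ) {b : Matrix (Fin n) (Fin n) ℂ} (hb : IsUpperTri b) :
    projRowsGE n r * b = projRowsGE n r * b * projRowsGE n r := by
  ext i k
  simp only [projRowsGE, Matrix.diagonal_mul, Matrix.mul_diagonal]
  by_cases hik : (k : ℕ) < i
  · simp [hb i k hik]
  · split_ifs <;> first | omega | simp

lemma mul_projColsLE_of_isUpperTri (c : ℕ) {b : Matrix (Fin n) (Fin n) ℂ} (hb : IsUpperTri b) :
    b * projColsLE n c = projColsLE n c * b * projColsLE n c := by
  ext l j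
  simp only [projColsLE, Matrix.diagonal_mul, Matrix.mul_diagonal]
  by_cases hjl : (j : ℕ) < l
  · simp [hb l j hjl]
  · split_ifs <;> first | omega | simp

lemma corner_mul_mul {b b' : Matrix (Fin n) (Fin n) ℂ} (hb : IsUpperTri b) (hb' : IsUpperTri b')
    (r c : ℕ) (X : Matrix (Fin n) (Fin n) ℂ) :
    corner r c (b * X * b') = projRowsGE n r * b * corner r c X * (b' * projColsLE n c) := by
  calc corner r c (b * X * b')
      = (projRowsGE n r * b) * X * (b' * projColsLE n c) := by
        simp only [corner, Matrix.mul_assoc]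
    _ = (projRowsGE n r * b * projRowsGE n r) * X * (projColsLE n c * b' * projColsLE n c) := by
        rw [← projRowsGE_mul_of_isUpperTri r hb, ← mul_projColsLE_of_isUpperTri c hb']
    _ = _ := by simp only [corner, Matrix.mul_assoc]

lemma corner_lowPart {r c : ℕ} (hcr : c < r) (X : Matrix (Fin n) (Fin n) ℂ) :
    corner r c (lowPart X) = corner r c X := by
  ext i j
  simp only [corner_apply, lowPart, Matrix.of_apply]
  split_ifs <;> first | rfl | omega

lemma rank_corner_coact_le {r c : ℕ} (hcr : c < r) {b : Matrix (Fin n) (Fin n) ℂ}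
    (hb : IsUpperTri b) (X : Matrix (Fin n) (Fin n) ℂ) :
    (corner r c (coact b X)).rank ≤ (corner r c X).rank := by
  rw [coact, corner_lowPart hcr, corner_mul_mul hb hb.inv]
  exact (Matrix.rank_mul_le_left _ _).trans (Matrix.rank_mul_le_right _ _)

lemma corner_fD (r c : ℕ) (D : Finset (ℕ × ℕ)) :
    corner r c (fD n D) = fD n (D.filter fun p => r ≤ p.1 ∧ p.2 ≤ c) := by
  ext i j
  simp only [corner_apply, fD, Matrix.of_apply, mem_filter]
  split_ifs <;> tauto

lemma rank_fD_le_card (D : Finset (ℕ × ℕ)) : (fD n D).rank ≤ D.card := by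
  have hfactor : fD n D =
      Matrix.of (fun (i : Fin n) (p : D) => if (i : ℕ) + 1 = p.1.1 then (1 : ℂ) else 0) *
        Matrix.of (fun (p : D) (j : Fin n) => if (j : ℕ) + 1 = p.1.2 then (1 : ℂ) else 0) := by
    ext i j
    have hpos (p : ℕ × ℕ) :
        ((j : ℕ) + 1 = p.2 ∧ (i : ℕ) + 1 = p.1) ↔ ((i : ℕ) + 1, (j : ℕ) + 1) = p := by
      rw [Prod.ext_iff]
      exact and_comm
    simp only [fD, Matrix.mul_apply, Matrix.of_apply, mul_boole, ← ite_and, hpos]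
    rw [Finset.sum_coe_sort D (fun p => if ((i : ℕ) + 1, (j : ℕ) + 1) = p then (1 : ℂ) else 0),
      Finset.sum_ite_eq]
  rw [hfactor, ← Fintype.card_coe D]
  exact (Matrix.rank_mul_le_left _ _).trans (Matrix.rank_le_card_width _)

lemma rank_corner_le_of_mem_Omega {r c : ℕ} (hcr : c < r) {D : Finset (ℕ × ℕ)}
    {Y : Matrix (Fin n) (Fin n) ℂ} (hY : Y ∈ Omega n D) :
    (corner r c Y).rank ≤ (D.filter fun p => r ≤ p.1 ∧ p.2 ≤ c).card := by
  obtain ⟨b, -, hb, rfl⟩ := hY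
  calc (corner r c (coact b (fD n D))).rank ≤ (corner r c (fD n D)).rank :=
        rank_corner_coact_le hcr hb _
    _ ≤ _ := corner_fD r c D ▸ rank_fD_le_card _

end Corner

theorem card_filter_corner_le_of_omega_subset_closure {n : ℕ} {D D' : Finset (ℕ × ℕ)}
    (hD : IsRP n D) (h : Omega n D ⊆ closure (Omega n D')) {r c : ℕ} (hcr : c < r) :
    (D.filter fun p => r ≤ p.1 ∧ p.2 ≤ c).card ≤ (D'.filter fun p => r ≤ p.1 ∧ p.2 ≤ c).card := by
  obtain ⟨ρ, γ, hminor⟩ :=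
    (hD.mono (filter_subset (fun p => r ≤ p.1 ∧ p.2 ≤ c) D)).exists_submatrix_fD_eq_one
  have hcl : corner r c (fD n D) ∈ closure (corner r c '' Omega n D') :=
    map_mem_closure (continuous_corner r c) (h hD.fD_mem_Omega) (Set.mapsTo_image _ _)
  rw [corner_fD] at hcl
  rw [← Fintype.card_coe]
  exact Matrix.card_le_of_mem_closure
    (Set.forall_mem_image.2 fun Y hY => rank_corner_le_of_mem_Omega hcr hY) hcl ρ γ
    (by simp [hminor])

lemma kerov_eq_self {D : Finset (ℕ × ℕ)} {a : ℕ}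
    (h : ∀ q ∈ D, a ≠ 2 * q.1 - 2 ∧ a ≠ 2 * q.2 - 1) : kerov D a = a := by
  rw [kerov, dif_neg fun ⟨q, hq, he⟩ => (h q hq).1 he, dif_neg fun ⟨q, hq, he⟩ => (h q hq).2 he]

namespace IsRP

variable {n : ℕ} {D : Finset (ℕ × ℕ)}

lemma kerov_row_slot (hD : IsRP n D) {p : ℕ × ℕ} (hp : p ∈ D) :
    kerov D (2 * p.1 - 2) = 2 * p.2 - 1 := by
  have h : ∃ q ∈ D, 2 * p.1 - 2 = 2 * q.1 - 2 := ⟨p, hp, rfl⟩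
  obtain ⟨hq, hpq⟩ := h.choose_spec
  have := hD.bounds hp
  have := hD.bounds hq
  rw [kerov, dif_pos h, hD.eq_of_fst_eq_s6 hq hp (by omega)]

lemma kerov_col_slot (hD : IsRP n D) {p : ℕ × ℕ} (hp : p ∈ D) :
    kerov D (2 * p.2 - 1) = 2 * p.1 - 2 := by
  have hrow : ¬ ∃ q ∈ D, 2 * p.2 - 1 = 2 * q.1 - 2 := by
    rintro ⟨q, hq, hpq⟩
    have := hD.bounds hp
    have := hD.bounds hq
    omega
  have h : ∃ q ∈ D, 2 * p.2 - 1 = 2 * q.2 - 1 := ⟨p, hp, rfl⟩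
  obtain ⟨hq, hpq⟩ := h.choose_spec
  have := hD.bounds hp
  have := hD.bounds hq
  rw [kerov, dif_neg hrow, dif_pos h, hD.eq_of_snd_eq_s6 hq hp (by omega)]

theorem card_filter_kerov (hD : IsRP n D) (i j : ℕ) :
    ((Icc 1 (2 * n - 2)).filter fun a => a ≤ i ∧ j ≤ kerov D a).card =
      ((Icc 1 (2 * n - 2)).filter fun a => a ≤ i ∧ j ≤ a).card +
        (D.filter fun p => 2 * p.2 - 1 ≤ i ∧ 2 * p.2 - 1 < j ∧ j ≤ 2 * p.1 - 2 ∧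
          i < 2 * p.1 - 2).card := by
  let F : ℕ → ℤ := fun a =>
    (if a ≤ i ∧ j ≤ kerov D a then 1 else 0) - (if a ≤ i ∧ j ≤ a then 1 else 0)
  let rowSlots := D.image fun p => 2 * p.1 - 2
  let colSlots := D.image fun p => 2 * p.2 - 1
  have hsub : rowSlots ∪ colSlots ⊆ Icc 1 (2 * n - 2) := by
    intro a ha
    simp only [rowSlots, colSlots, mem_union, mem_image] at ha
    rcases ha with ⟨p, hp, rfl⟩ | ⟨p, hp, rfl⟩ <;>
    · have := hD.bounds hp
      rw [mem_Icc]
      omega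
  have hfix : ∀ a ∈ Icc 1 (2 * n - 2), a ∉ rowSlots ∪ colSlots → F a = 0 := by
    intro a _ ha
    simp only [rowSlots, colSlots, mem_union, mem_image, not_or, not_exists, not_and] at ha
    have hfixed : kerov D a = a :=
      kerov_eq_self fun q hq => ⟨Ne.symm (ha.1 q hq), Ne.symm (ha.2 q hq)⟩
    simp only [F, hfixed, sub_self]
  have hdisj : Disjoint rowSlots colSlots := by
    simp only [rowSlots, colSlots, disjoint_left, mem_image, not_exists, not_and]
    rintro a ⟨p, hp, rfl⟩ q hq hpq
    have := hD.bounds hp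
    have := hD.bounds hq
    omega
  have hrow : ∀ p ∈ D, ∀ q ∈ D, 2 * p.1 - 2 = 2 * q.1 - 2 → p = q := fun p hp q hq hpq =>
    hD.eq_of_fst_eq_s6 hp hq (by have := hD.bounds hp; have := hD.bounds hq; omega)
  have hcol : ∀ p ∈ D, ∀ q ∈ D, 2 * p.2 - 1 = 2 * q.2 - 1 → p = q := fun p hp q hq hpq =>
    hD.eq_of_snd_eq_s6 hp hq (by have := hD.bounds hp; have := hD.bounds hq; omega)
  have hrook : ∀ p ∈ D, F (2 * p.1 - 2) + F (2 * p.2 - 1) = if 2 * p.2 - 1 ≤ i ∧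
      2 * p.2 - 1 < j ∧ j ≤ 2 * p.1 - 2 ∧ i < 2 * p.1 - 2 then 1 else 0 := by
    intro p hp
    have := hD.bounds hp
    simp only [F, hD.kerov_row_slot hp, hD.kerov_col_slot hp]
    split_ifs <;> omega
  have hcard : (((Icc 1 (2 * n - 2)).filter fun a => a ≤ i ∧ j ≤ kerov D a).card : ℤ) -
      ((Icc 1 (2 * n - 2)).filter fun a => a ≤ i ∧ j ≤ a).card =
        (D.filter fun p => 2 * p.2 - 1 ≤ i ∧ 2 * p.2 - 1 < j ∧ j ≤ 2 * p.1 - 2 ∧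
          i < 2 * p.1 - 2).card := by
    simp only [natCast_card_filter, ← sum_sub_distrib]
    rw [← sum_subset hsub hfix, sum_union hdisj, sum_image hrow, sum_image hcol,
      ← sum_add_distrib]
    exact sum_congr rfl hrook
  omega

lemma filter_window_eq_filter_corner (hD : IsRP n D) (i j : ℕ) :
    D.filter (fun p => 2 * p.2 - 1 ≤ i ∧ 2 * p.2 - 1 < j ∧ j ≤ 2 * p.1 - 2 ∧ i < 2 * p.1 - 2) =
      D.filter (fun p => max ((i + 4) / 2) ((j + 3) / 2) ≤ p.1 ∧
        p.2 ≤ min ((i + 1) / 2) (j / 2)) :=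
  filter_congr fun p hp => by have := hD.bounds hp; omega

end IsRP

theorem kerov_bruhatLE_of_omega_subset_closure_general (n : ℕ)
    (D D' : Finset (ℕ × ℕ)) (hD : IsRP n D) (hD' : IsRP n D')
    (h : Omega n D ⊆ closure (Omega n D')) :
    bruhatLE (2 * n - 2) (kerov D) (kerov D') := by
  intro i _ j _
  rw [hD.card_filter_kerov, hD'.card_filter_kerov, hD.filter_window_eq_filter_corner,
    hD'.filter_window_eq_filter_corner]
  exact Nat.add_le_add_left (card_filter_corner_le_of_omega_subset_closure hD h (by omega)) _

/-- Corollary 1.8: if `Ω_D` is contained in the closure of `Ω_{D'}`, then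
`σ_D ≤_B σ_{D'}` in the Bruhat–Chevalley order on `S_{2n−2}`. -/
theorem kerov_bruhatLE_of_omega_subset_closure (n : ℕ) (hn : 2 ≤ n)
    (D D' : Finset (ℕ × ℕ)) (hD : IsRP n D) (hD' : IsRP n D')
    (h : Omega n D ⊆ closure (Omega n D')) :
    bruhatLE (2 * n - 2) (kerov D) (kerov D') :=
  kerov_bruhatLE_of_omega_subset_closure_general n D D' hD hD' h
end

section
/- For every rook placement D ⊆ Φ⁺ and every map ξ : D → ℂ∖{0}, the subspace 𝔭 is a maximal f_{D,ξ}-isotropic subspace of 𝔫: tr(f_{D,ξ}·(xy − yx)) = 0 for all x, y ∈ 𝔭, and any subspace of 𝔫 strictly containing 𝔭 fails this property. -/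
/-- The set `M = M_{j_1} ∪ … ∪ M_{j_s}` associated with a rook placement `D`:
columns `j` are processed in increasing order, and for the rook `(i,j)` of `D` in
column `j` (if any) one adds `M_j = {(i,q) : j < q < i, (q,j) ∉ (previous M's)}`. -/
def Mset (n : ℕ) (D : Finset (ℕ × ℕ)) : Finset (ℕ × ℕ) :=
  (List.range (n + 1)).foldl
    (fun acc j =>
      acc ∪ (D.filter (fun p => p.2 = j)).biUnion
        (fun p => ((Finset.Ioo j p.1).filter (fun q => (q, j) ∉ acc)).image
          (fun q => (p.1, q))))
    ∅

/-- Membership in the subspace `𝔭 ⊆ 𝔫`, the linear span of the matrix units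
`e_{j,i}` with `(i,j) ∈ Φ⁺ ∖ M`: a matrix lies in `𝔭` iff it is strictly
upper-triangular and vanishes at every position coming from `M`. -/
def inP (n : ℕ) (D : Finset (ℕ × ℕ)) (x : Matrix (Fin n) (Fin n) ℂ) : Prop :=
  ∀ a b : Fin n, (¬ a < b ∨ ((b : ℕ) + 1, (a : ℕ) + 1) ∈ Mset n D) → x a b = 0

/-- The subspace `𝔭` as a submodule of the space of matrices. -/
noncomputable def pSubmod (n : ℕ) (D : Finset (ℕ × ℕ)) : Submodule ℂ (Matrix (Fin n) (Fin n) ℂ) where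
  carrier := {x | inP n D x}
  add_mem' := by
    intro x y hx hy a b h
    have := hx a b h
    have := hy a b h
    simp [Matrix.add_apply, *]
  zero_mem' := by intro a b _; simp
  smul_mem' := by
    intro c x hx a b h
    simp [Matrix.smul_apply, hx a b h]

/-- A matrix belongs to `𝔫` iff it is strictly upper-triangular. -/
def IsStrictUpper {n : ℕ} (x : Matrix (Fin n) (Fin n) ℂ) : Prop :=
  ∀ a b : Fin n, ¬ a < b → x a b = 0

/-!
On a rook `(i,j) ∈ D`, the entry `[x,y]_{j,i}` is a sum of products `x_{j,q} y_{q,i}` and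
`y_{j,q} x_{q,i}` with `j < q < i`, and the recursion defining `M` puts `(q,j)` or `(i,q)`
into `M`; so all these products vanish for `x, y ∈ 𝔭`, which makes `𝔭` isotropic.

If `𝔭 ⊊ V ⊆ 𝔫`, then `V` contains a matrix `w ≠ 0` supported on `M`. Pick `w_{q,i} ≠ 0` with
`q` minimal; `(i,q) ∈ M` comes from a rook `(i,j)` with `j < q` and `(q,j) ∉ M`, so
`e_{j,q} ∈ 𝔭`. Minimality of `q` makes column `j` of `w` vanish, and the rook condition
leaves a single term: `tr(f_{D,ξ} [w, e_{j,q}]) = -ξ(i,j) w_{q,i} ≠ 0`.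
-/

namespace Matrix

theorem trace_mul_eq_zero_of_apply_ne_zero {m R : Type*} [Fintype m]
    [NonUnitalNonAssocSemiring R] {A B : Matrix m m R} (h : ∀ i j, A i j ≠ 0 → B j i = 0) :
    trace (A * B) = 0 :=
  Finset.sum_eq_zero fun i _ => Finset.sum_eq_zero fun j _ => by
    change A i j * B j i = 0
    by_cases hA : A i j = 0
    · rw [hA, zero_mul]
    · rw [h i j hA, mul_zero]

theorem trace_mul_commutator_single {m R : Type*} [Fintype m] [DecidableEq m]
    [CommRing R] (f w : Matrix m m R) (c a : m) :
    trace (f * (w * single c a 1 - single c a 1 * w)) =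
      (f * w) a c - (w * f) a c := by
  rw [mul_sub, trace_sub, ← Matrix.mul_assoc, trace_mul_single,
    trace_mul_comm, Matrix.mul_assoc, trace_single_mul]
  simp

end Matrix

namespace Mset

def step (D acc : Finset (ℕ × ℕ)) (j : ℕ) : Finset (ℕ × ℕ) :=
  acc ∪ (D.filter (fun p => p.2 = j)).biUnion
    (fun p => ((Finset.Ioo j p.1).filter (fun q => (q, j) ∉ acc)).image
      (fun q => (p.1, q)))

/-- `M_{j_1} ∪ … ∪ M_{j_r}` for the rooks in columns `< k`. -/
def upTo (D : Finset (ℕ × ℕ)) (k : ℕ) : Finset (ℕ × ℕ) :=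
  (List.range k).foldl (step D) ∅

variable {D : Finset (ℕ × ℕ)}

theorem mem_upTo_succ {k : ℕ} {x : ℕ × ℕ} :
    x ∈ upTo D (k + 1) ↔ x ∈ upTo D k ∨
      ((x.1, k) ∈ D ∧ k < x.2 ∧ x.2 < x.1 ∧ (x.2, k) ∉ upTo D k) := by
  rw [upTo, List.range_succ, List.foldl_concat, ← upTo, step, Finset.mem_union]
  constructor
  · rintro (h | h)
    · exact .inl h
    · obtain ⟨⟨i, j⟩, hp, hx⟩ := Finset.mem_biUnion.1 h
      obtain ⟨q, hq, rfl⟩ := Finset.mem_image.1 hx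
      simp only [Finset.mem_filter, Finset.mem_Ioo] at hp hq
      obtain ⟨hij, rfl⟩ := hp
      exact .inr ⟨hij, hq.1.1, hq.1.2, hq.2⟩
  · rintro (h | ⟨hD, h₁, h₂, h₃⟩)
    · exact .inl h
    · refine .inr (Finset.mem_biUnion.2 ⟨(x.1, k), ?_, ?_⟩)
      · exact Finset.mem_filter.2 ⟨hD, rfl⟩
      · exact Finset.mem_image.2 ⟨x.2, by simp [h₁, h₂, h₃]⟩

theorem upTo_mono : Monotone (upTo D) :=
  monotone_nat_of_le_succ fun _ _ hx => mem_upTo_succ.2 (.inl hx)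

theorem lt_snd_of_mem_upTo_of_notMem {j k : ℕ} {x : ℕ × ℕ} (hk : x ∈ upTo D k)
    (hj : x ∉ upTo D j) : j < x.2 := by
  induction k with
  | zero => simp [upTo] at hk
  | succ k ih =>
    rcases mem_upTo_succ.1 hk with h | ⟨-, hkx, -⟩
    · exact ih h
    · by_contra! hxj
      exact hj (upTo_mono (by omega) hk)

theorem exists_of_mem_upTo {k : ℕ} {x : ℕ × ℕ} (hk : x ∈ upTo D k) :
    ∃ j < k, (x.1, j) ∈ D ∧ j < x.2 ∧ x.2 < x.1 ∧ (x.2, j) ∉ upTo D j := by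
  induction k with
  | zero => simp [upTo] at hk
  | succ k ih =>
    rcases mem_upTo_succ.1 hk with h | h
    · obtain ⟨j, hjk, hj⟩ := ih h
      exact ⟨j, hjk.trans k.lt_succ_self, hj⟩
    · exact ⟨k, k.lt_succ_self, h⟩

end Mset

open Mset

theorem exists_of_mem_Mset {n i q : ℕ} {D : Finset (ℕ × ℕ)} (h : (i, q) ∈ Mset n D) :
    ∃ j, (i, j) ∈ D ∧ j < q ∧ q < i ∧ (q, j) ∉ Mset n D := by
  obtain ⟨j, -, hD, hjq, hqi, hqj⟩ := exists_of_mem_upTo h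
  exact ⟨j, hD, hjq, hqi, fun hM => (lt_snd_of_mem_upTo_of_notMem hM hqj).false⟩

theorem mem_Mset_of_notMem {n i j q : ℕ} {D : Finset (ℕ × ℕ)} (hj : j ≤ n) (hD : (i, j) ∈ D)
    (hjq : j < q) (hqi : q < i) (hqj : (q, j) ∉ Mset n D) : (i, q) ∈ Mset n D :=
  upTo_mono (show j + 1 ≤ n + 1 by omega) <| mem_upTo_succ.2 <|
    .inr ⟨hD, hjq, hqi, fun h => hqj (upTo_mono (show j ≤ n + 1 by omega) h)⟩

section

variable {n : ℕ} {D : Finset (ℕ × ℕ)}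

theorem exists_rook_of_mem_Mset (hD : IsRP n D) {a b : Fin n}
    (h : ((b : ℕ) + 1, (a : ℕ) + 1) ∈ Mset n D) :
    a < b ∧ ∃ c : Fin n, c < a ∧ ((b : ℕ) + 1, (c : ℕ) + 1) ∈ D ∧
      ((a : ℕ) + 1, (c : ℕ) + 1) ∉ Mset n D := by
  obtain ⟨j, hbj, hja, hab, haj⟩ := exists_of_mem_Mset h
  have hj : 1 ≤ j := by
    have := hD.1 hbj
    simp only [PhiPos, Finset.mem_filter, Finset.mem_product, Finset.mem_Icc] at this
    omega
  refine ⟨Fin.lt_def.2 (by omega), ⟨j - 1, by omega⟩, Fin.lt_def.2 ?_, ?_⟩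
  · simp only; omega
  · simpa only [Nat.sub_add_cancel hj] using ⟨hbj, haj⟩

theorem mem_Mset_of_rook {b c d : Fin n} (hdb : ((d : ℕ) + 1, (b : ℕ) + 1) ∈ D) (hbc : b < c)
    (hcd : c < d) (hcb : ((c : ℕ) + 1, (b : ℕ) + 1) ∉ Mset n D) :
    ((d : ℕ) + 1, (c : ℕ) + 1) ∈ Mset n D :=
  mem_Mset_of_notMem b.isLt hdb (by simpa using hbc) (by simpa using hcd) hcb

theorem mem_of_fDxi_apply_ne_zero {ξ : ℕ × ℕ → ℂ} {i j : Fin n} (h : fDxi n D ξ i j ≠ 0) :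
    ((i : ℕ) + 1, (j : ℕ) + 1) ∈ D := by
  by_contra hD
  simp [fDxi, hD] at h

theorem mul_fDxi_apply_of_mem (hD : IsRP n D) (ξ : ℕ × ℕ → ℂ) {b c : Fin n}
    (hbc : ((b : ℕ) + 1, (c : ℕ) + 1) ∈ D) (w : Matrix (Fin n) (Fin n) ℂ) (a : Fin n) :
    (w * fDxi n D ξ) a c = w a b * ξ ((b : ℕ) + 1, (c : ℕ) + 1) := by
  rw [Matrix.mul_apply, Finset.sum_eq_single b]
  · simp [fDxi, hbc]
  · intro d _ hdb
    have hdc : ((d : ℕ) + 1, (c : ℕ) + 1) ∉ D := fun hdc =>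
      (hD.2 _ hdc _ hbc (by simp [Fin.val_inj, hdb])).2 rfl
    simp [fDxi, hdc]
  · simp

theorem mul_apply_eq_zero_of_mem_pSubmod {x y : Matrix (Fin n) (Fin n) ℂ}
    (hx : x ∈ pSubmod n D) (hy : y ∈ pSubmod n D) {b d : Fin n}
    (hdb : ((d : ℕ) + 1, (b : ℕ) + 1) ∈ D) : (x * y) b d = 0 := by
  refine (Matrix.mul_apply).trans (Finset.sum_eq_zero fun c _ => ?_)
  by_cases hbc : b < c
  · by_cases hcd : c < d
    · by_cases hcb : ((c : ℕ) + 1, (b : ℕ) + 1) ∈ Mset n D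
      · rw [hx b c (.inr hcb), zero_mul]
      · rw [hy c d (.inr (mem_Mset_of_rook hdb hbc hcd hcb)), mul_zero]
    · rw [hy c d (.inl hcd), mul_zero]
  · rw [hx b c (.inl hbc), zero_mul]

theorem pSubmod_isotropic (ξ : ℕ × ℕ → ℂ) {x y : Matrix (Fin n) (Fin n) ℂ}
    (hx : x ∈ pSubmod n D) (hy : y ∈ pSubmod n D) :
    Matrix.trace (fDxi n D ξ * (x * y - y * x)) = 0 :=
  Matrix.trace_mul_eq_zero_of_apply_ne_zero fun _ _ h => by
    have hD := mem_of_fDxi_apply_ne_zero h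
    rw [Matrix.sub_apply, mul_apply_eq_zero_of_mem_pSubmod hx hy hD,
      mul_apply_eq_zero_of_mem_pSubmod hy hx hD, sub_zero]

theorem single_mem_pSubmod {a c : Fin n} (hca : c < a)
    (hac : ((a : ℕ) + 1, (c : ℕ) + 1) ∉ Mset n D) : Matrix.single c a 1 ∈ pSubmod n D := by
  refine fun i j h => Matrix.single_apply_of_ne _ _ _ _ _ ?_
  rintro ⟨rfl, rfl⟩
  exact h.elim (· hca) hac

def mPart (n : ℕ) (D : Finset (ℕ × ℕ)) (v : Matrix (Fin n) (Fin n) ℂ) :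
    Matrix (Fin n) (Fin n) ℂ :=
  Matrix.of fun a b => if ((b : ℕ) + 1, (a : ℕ) + 1) ∈ Mset n D then v a b else 0

theorem sub_mPart_mem_pSubmod {v : Matrix (Fin n) (Fin n) ℂ} (hv : IsStrictUpper v) :
    v - mPart n D v ∈ pSubmod n D := by
  rintro a b (hab | hM)
  · simp [mPart, hv a b hab]
  · simp [mPart, hM]

theorem exists_Mset_entry_min_row {v : Matrix (Fin n) (Fin n) ℂ} (hv : IsStrictUpper v)
    (hvP : v ∉ pSubmod n D) :
    ∃ a b : Fin n, ((b : ℕ) + 1, (a : ℕ) + 1) ∈ Mset n D ∧ v a b ≠ 0 ∧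
      ∀ a' b' : Fin n, ((b' : ℕ) + 1, (a' : ℕ) + 1) ∈ Mset n D → v a' b' ≠ 0 → a ≤ a' := by
  have hne : {p : Fin n × Fin n |
      ((p.2 : ℕ) + 1, (p.1 : ℕ) + 1) ∈ Mset n D ∧ v p.1 p.2 ≠ 0}.Nonempty := by
    by_contra h
    refine hvP fun a b => ?_
    rintro (hab | hM)
    · exact hv a b hab
    · by_contra hne
      exact h ⟨(a, b), hM, hne⟩
  obtain ⟨⟨a, b⟩, hab, hmin⟩ := Set.exists_min_image _ Prod.fst (Set.toFinite _) hne
  exact ⟨a, b, hab.1, hab.2, fun a' b' hM hv => hmin (a', b') ⟨hM, hv⟩⟩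

end

/-- Proposition 2.7: `𝔭` is a maximal `f_{D,ξ}`-isotropic subspace of `𝔫`:
`tr(f_{D,ξ}·[x,y]) = 0` for all `x, y ∈ 𝔭`, and every subspace of `𝔫` strictly
containing `𝔭` fails this property. -/
theorem pSubmod_maximal_isotropic (n : ℕ) (D : Finset (ℕ × ℕ)) (hD : IsRP n D)
    (ξ : ℕ × ℕ → ℂ) (hξ : ∀ p ∈ D, ξ p ≠ 0) :
    (∀ x ∈ pSubmod n D, ∀ y ∈ pSubmod n D,
        Matrix.trace (fDxi n D ξ * (x * y - y * x)) = 0) ∧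
    ∀ V : Submodule ℂ (Matrix (Fin n) (Fin n) ℂ),
      (∀ v ∈ V, IsStrictUpper v) → pSubmod n D < V →
      ¬ (∀ x ∈ V, ∀ y ∈ V, Matrix.trace (fDxi n D ξ * (x * y - y * x)) = 0) := by
  refine ⟨fun x hx y hy => pSubmod_isotropic ξ hx hy, fun V hV hlt hiso => ?_⟩
  obtain ⟨v, hvV, hvP⟩ := SetLike.exists_of_lt hlt
  obtain ⟨a, b, hM, hvab, hmin⟩ := exists_Mset_entry_min_row (hV v hvV) hvP
  obtain ⟨-, c, hca, hbc, hac⟩ := exists_rook_of_mem_Mset hD hM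
  have hwV : mPart n D v ∈ V := by
    simpa using V.sub_mem hvV (hlt.le (sub_mPart_mem_pSubmod (hV v hvV)))
  have hcol : ∀ d, mPart n D v d c = 0 := by
    intro d
    by_cases hdc : ((c : ℕ) + 1, (d : ℕ) + 1) ∈ Mset n D
    · by_contra hne
      have had := hmin d c hdc (by simpa [mPart, hdc] using hne)
      exact (exists_rook_of_mem_Mset hD hdc).1.not_ge (hca.le.trans had)
    · simp [mPart, hdc]
  have h := hiso _ hwV _ (hlt.le (single_mem_pSubmod hca hac))
  rw [Matrix.trace_mul_commutator_single, Matrix.mul_apply, Finset.sum_eq_zero (by simp [hcol]),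
    mul_fDxi_apply_of_mem hD ξ hbc, zero_sub, neg_eq_zero] at h
  exact mul_ne_zero (by simpa [mPart, hM] using hvab) (hξ _ hbc) h
end

section
/- For every rook placement D ∈ ℛ, one has L̃⁻(D) = Ñ⁻(D). Equivalently: if T is a rook placement with T < D and |T| < |D|, then there exists a minimal element (i,j) of D (for ≼) such that T ≤ D∖{(i,j)} < D. -/
/-- The rank matrix: `(R_D)_{i,j} = #{(p,q) ∈ D : p ≥ i, q ≤ j}` for `i > j`, else `0`. -/
def RD (D : Finset (ℕ × ℕ)) (i j : ℕ) : ℕ :=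
  if j < i then (D.filter (fun p => i ≤ p.1 ∧ p.2 ≤ j)).card else 0

/-- The partial order on rook placements: `D ≤ D'` iff `R_D ≤ R_{D'}` entrywise. -/
def rpLE (D D' : Finset (ℕ × ℕ)) : Prop := ∀ i j, RD D i j ≤ RD D' i j

/-- Strict version of the order on rook placements. -/
def rpLT (D D' : Finset (ℕ × ℕ)) : Prop := rpLE D D' ∧ D ≠ D'
/-- The partial order `≼` on `Φ⁺`: `(a,b) ≼ (c,d)` iff `a ≤ c` and `b ≥ d`. -/
def Ple (p q : ℕ × ℕ) : Prop := p.1 ≤ q.1 ∧ q.2 ≤ p.2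

/-- The strict order `≺` on `Φ⁺`. -/
def Plt (p q : ℕ × ℕ) : Prop := Ple p q ∧ p ≠ q

/-!
If `T ≤ D` and `|T| < |D|`, some `p ∈ D` has `R_T < R_D` at every entry `≼ p`. Otherwise the
entries where `R_T` and `R_D` agree would cover all of `D` by their up-sets, and computing the
size of a union of up-sets by inclusion–exclusion over its staircase (whose outer corners are
tight and whose inner corners satisfy `R_T ≤ R_D`) would give `|D| ≤ |T|`. Removing a
`≼`-minimal element `q ≼ p` of `D` then lowers `R_D` only where it was strictly above `R_T`,
so `T ≤ D ∖ {q}`. Both inclusions of `L̃⁻(D) = Ñ⁻(D)` follow, the second because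
`D ∖ {q} ≤ D ∖ {q'}` forces `q' ≼ q`.
-/

open Finset

instance : DecidableRel Ple := fun p q => inferInstanceAs (Decidable (p.1 ≤ q.1 ∧ q.2 ≤ p.2))

theorem Ple.refl (p : ℕ × ℕ) : Ple p p := ⟨le_rfl, le_rfl⟩

theorem Ple.trans {p q r : ℕ × ℕ} (hpq : Ple p q) (hqr : Ple q r) : Ple p r :=
  ⟨hpq.1.trans hqr.1, hqr.2.trans hpq.2⟩

theorem mem_PhiPos_s14 {n : ℕ} {x : ℕ × ℕ} (hx : x ∈ PhiPos n) : 1 ≤ x.2 ∧ x.2 < x.1 := by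
  simp only [PhiPos, mem_filter, mem_product, mem_Icc] at hx
  omega

theorem IsRP.erase {n : ℕ} {D : Finset (ℕ × ℕ)} (hD : IsRP n D) (q : ℕ × ℕ) :
    IsRP n (D.erase q) :=
  ⟨(erase_subset q D).trans hD.1,
    fun p hp r hr => hD.2 p (mem_of_mem_erase hp) r (mem_of_mem_erase hr)⟩

def upCount (X : Finset (ℕ × ℕ)) (p : ℕ × ℕ) : ℕ := #{x ∈ X | Ple p x}

section upCount

variable {X T S D : Finset (ℕ × ℕ)} {p q : ℕ × ℕ}

theorem RD_eq_upCount {i j : ℕ} (h : j < i) : RD X i j = upCount X (i, j) := if_pos h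

theorem rpLE_iff : rpLE T D ↔ ∀ p : ℕ × ℕ, p.2 < p.1 → upCount T p ≤ upCount D p := by
  refine ⟨fun h p hp => ?_, fun h i j => ?_⟩
  · simpa only [RD_eq_upCount hp] using h p.1 p.2
  · unfold RD
    split_ifs with hji
    exacts [h (i, j) hji, le_rfl]

theorem rpLE.trans (hTS : rpLE T S) (hSD : rpLE S D) : rpLE T D :=
  fun i j => (hTS i j).trans (hSD i j)

theorem upCount_mono (h : T ⊆ D) (p : ℕ × ℕ) : upCount T p ≤ upCount D p :=
  card_le_card (filter_subset_filter _ h)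

theorem rpLE_of_subset (h : T ⊆ D) : rpLE T D :=
  rpLE_iff.2 fun p _ => upCount_mono h p

theorem erase_rpLT (hq : q ∈ D) : rpLT (D.erase q) D :=
  ⟨rpLE_of_subset (erase_subset q D), (erase_ssubset hq).ne⟩

theorem upCount_erase_add_one (hq : q ∈ D) (hpq : Ple p q) :
    upCount (D.erase q) p + 1 = upCount D p := by
  rw [upCount, filter_erase]
  exact card_erase_add_one (mem_filter.2 ⟨hq, hpq⟩)

theorem upCount_erase_of_not_ple (hpq : ¬Ple p q) : upCount (D.erase q) p = upCount D p := by
  rw [upCount, filter_erase, erase_eq_of_notMem fun h => hpq (mem_filter.1 h).2]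
  rfl

theorem upCount_cell (X : Finset (ℕ × ℕ)) (a b : ℕ) :
    upCount X (a, b + 1) + upCount X (a + 1, b) =
      upCount X (a + 1, b + 1) + upCount X (a, b) + if (a, b + 1) ∈ X then 1 else 0 := by
  simp only [upCount, card_filter, ← sum_ite_eq' X (a, b + 1) fun _ => 1, ← sum_add_distrib]
  refine sum_congr rfl fun ⟨x₁, x₂⟩ _ => ?_
  split_ifs <;> simp only [Ple, Prod.mk.injEq] at * <;> omega

theorem eq_of_upCount_eq {n : ℕ} (hT : T ⊆ PhiPos n) (hD : D ⊆ PhiPos n)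
    (h : ∀ p : ℕ × ℕ, p.2 < p.1 → upCount T p = upCount D p) : T = D := by
  have hcell : ∀ a b, b + 1 < a → ((a, b + 1) ∈ T ↔ (a, b + 1) ∈ D) := by
    intro a b hba
    have hcT := upCount_cell T a b
    have hcD := upCount_cell D a b
    rw [h (a, b + 1) hba, h (a + 1, b) (by simp only; omega), h (a + 1, b + 1) (by simp only; omega),
      h (a, b) (by simp only; omega)] at hcT
    split_ifs at hcT hcD with hmT hmD hmD <;> simp only [hmT, hmD] <;> omega
  ext ⟨a, c⟩
  by_cases hc : 1 ≤ c ∧ c < a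
  · obtain ⟨b, rfl⟩ : ∃ b, c = b + 1 := ⟨c - 1, by omega⟩
    exact hcell a b hc.2
  · exact iff_of_false (fun hx => hc (mem_PhiPos_s14 (hT hx))) (fun hx => hc (mem_PhiPos_s14 (hD hx)))

theorem rpLE_antisymm {n : ℕ} (hT : T ⊆ PhiPos n) (hS : S ⊆ PhiPos n) (hTS : rpLE T S)
    (hST : rpLE S T) : T = S :=
  eq_of_upCount_eq hT hS fun p hp => (rpLE_iff.1 hTS p hp).antisymm (rpLE_iff.1 hST p hp)

end upCount

def upClosureCount (F X : Finset (ℕ × ℕ)) : ℕ := #{x ∈ X | ∃ r ∈ F, Ple r x}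

section staircase

variable {F T D : Finset (ℕ × ℕ)} {q₀ q₁ : ℕ × ℕ}

/-- As `q₀` has the largest column in `F`, its up-set contains those of all points of `F` in rows
`≥ q₀.1`. -/
theorem exists_ple_iff_of_max (hq₀ : q₀ ∈ F) (hmax : ∀ r ∈ F, r.2 ≤ q₀.2) (x : ℕ × ℕ) :
    (∃ r ∈ F, Ple r x) ↔ (∃ r ∈ F.filter (·.1 < q₀.1), Ple r x) ∨ Ple q₀ x := by
  constructor
  · rintro ⟨r, hr, hrx⟩
    by_cases hrq : r.1 < q₀.1
    · exact Or.inl ⟨r, mem_filter.2 ⟨hr, hrq⟩, hrx⟩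
    · exact Or.inr ⟨(not_lt.1 hrq).trans hrx.1, hrx.2.trans (hmax r hr)⟩
  · rintro (⟨r, hr, hrx⟩ | hx)
    exacts [⟨r, (mem_filter.1 hr).1, hrx⟩, ⟨q₀, hq₀, hx⟩]

theorem upClosureCount_eq_upCount (X : Finset (ℕ × ℕ)) (hq₀ : q₀ ∈ F)
    (hmax : ∀ r ∈ F, r.2 ≤ q₀.2) (hF : F.filter (·.1 < q₀.1) = ∅) :
    upClosureCount F X = upCount X q₀ := by
  simp only [upClosureCount, upCount, exists_ple_iff_of_max hq₀ hmax, hF, notMem_empty,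
    false_and, exists_false, false_or]

/-- Inclusion–exclusion at the inner corner `(q₀.1, q₁.2)` of the staircase. -/
theorem upClosureCount_add_upCount (X : Finset (ℕ × ℕ)) (hq₀ : q₀ ∈ F)
    (hmax : ∀ r ∈ F, r.2 ≤ q₀.2) (hq₁ : q₁ ∈ F.filter (·.1 < q₀.1))
    (hmax₁ : ∀ r ∈ F.filter (·.1 < q₀.1), r.2 ≤ q₁.2) :
    upClosureCount F X + upCount X (q₀.1, q₁.2) =
      upClosureCount (F.filter (·.1 < q₀.1)) X + upCount X q₀ := by
  have hinter : ∀ x, ((∃ r ∈ F.filter (·.1 < q₀.1), Ple r x) ∧ Ple q₀ x) ↔ Ple (q₀.1, q₁.2) x := by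
    intro x
    obtain ⟨hq₁F, hq₁q₀⟩ := mem_filter.1 hq₁
    constructor
    · rintro ⟨⟨r, hr, hrx⟩, hx⟩
      exact ⟨hx.1, hrx.2.trans (hmax₁ r hr)⟩
    · rintro ⟨hx₁, hx₂⟩
      exact ⟨⟨q₁, hq₁, hq₁q₀.le.trans hx₁, hx₂⟩, hx₁, hx₂.trans (hmax q₁ hq₁F)⟩
  have hunion := card_union_add_card_inter
    {x ∈ X | ∃ r ∈ F.filter (fun r : ℕ × ℕ => r.1 < q₀.1), Ple r x} {x ∈ X | Ple q₀ x}
  simp only [← filter_or, ← filter_and, ← exists_ple_iff_of_max hq₀ hmax, hinter] at hunion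
  exact hunion

theorem upClosureCount_le (hle : ∀ p : ℕ × ℕ, p.2 < p.1 → upCount T p ≤ upCount D p)
    (F : Finset (ℕ × ℕ)) (hF : ∀ r ∈ F, r.2 < r.1) (htight : ∀ r ∈ F, upCount D r ≤ upCount T r) :
    upClosureCount F D ≤ upClosureCount F T := by
  induction F using strongInduction with
  | H F ih =>
  rcases F.eq_empty_or_nonempty with rfl | hne
  · simp [upClosureCount]
  obtain ⟨q₀, hq₀, hmax⟩ := F.exists_max_image Prod.snd hne
  rcases (F.filter (·.1 < q₀.1)).eq_empty_or_nonempty with hF' | hne'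
  · rw [upClosureCount_eq_upCount D hq₀ hmax hF', upClosureCount_eq_upCount T hq₀ hmax hF']
    exact htight q₀ hq₀
  obtain ⟨q₁, hq₁, hmax₁⟩ := (F.filter (·.1 < q₀.1)).exists_max_image Prod.snd hne'
  have hsub : F.filter (·.1 < q₀.1) ⊂ F := filter_ssubset.2 ⟨q₀, hq₀, lt_irrefl _⟩
  have hrest := ih _ hsub (fun r hr => hF r (mem_filter.1 hr).1)
    (fun r hr => htight r (mem_filter.1 hr).1)
  have hcorner := hle (q₀.1, q₁.2) ((hF q₁ (mem_filter.1 hq₁).1).trans (mem_filter.1 hq₁).2)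
  have hD := upClosureCount_add_upCount D hq₀ hmax hq₁ hmax₁
  have hT := upClosureCount_add_upCount T hq₀ hmax hq₁ hmax₁
  have hq₀tight := htight q₀ hq₀
  omega

end staircase

section erase

variable {T D : Finset (ℕ × ℕ)} {p q q' : ℕ × ℕ}

theorem exists_mem_forall_upCount_lt (hle : rpLE T D) (hcard : #T < #D) :
    ∃ p ∈ D, ∀ a : ℕ × ℕ, Ple a p → a.2 < a.1 → upCount T a < upCount D a := by
  by_contra! htight
  choose f hfp hf hft using htight
  let F := D.attach.image fun p => f p.1 p.2
  have hcover : upClosureCount F D = #D := by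
    refine congrArg card (filter_true_of_mem fun p hp => ?_)
    exact ⟨f p hp, mem_image.2 ⟨⟨p, hp⟩, mem_attach _ _, rfl⟩, hfp p hp⟩
  have hF := upClosureCount_le (rpLE_iff.1 hle) F
    (by simp only [F, mem_image]; rintro _ ⟨⟨p, hp⟩, -, rfl⟩; exact hf p hp)
    (by simp only [F, mem_image]; rintro _ ⟨⟨p, hp⟩, -, rfl⟩; exact hft p hp)
  have hT : upClosureCount F T ≤ #T := card_filter_le _ _
  omega

theorem exists_minimal_ple (hp : p ∈ D) :
    ∃ q ∈ D, Ple q p ∧ ∀ r ∈ D, Ple r q → r = q := by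
  -- `r.1 - r.2`, shifted to stay in `ℕ`, strictly decreases along `≺`
  let B := D.sup Prod.snd
  obtain ⟨q, hq, hmin⟩ := (D.filter (Ple · p)).exists_min_image (fun r => r.1 + (B - r.2))
    ⟨p, mem_filter.2 ⟨hp, Ple.refl p⟩⟩
  obtain ⟨hqD, hqp⟩ := mem_filter.1 hq
  refine ⟨q, hqD, hqp, fun r hr hrq => ?_⟩
  have hweight := hmin r (mem_filter.2 ⟨hr, hrq.trans hqp⟩)
  have hrB : r.2 ≤ B := le_sup (f := Prod.snd) hr
  obtain ⟨h₁, h₂⟩ := hrq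
  ext <;> omega

theorem exists_minimal_rpLE_erase (hle : rpLE T D) (hcard : #T < #D) :
    ∃ q ∈ D, (∀ r ∈ D, Ple r q → r = q) ∧ rpLE T (D.erase q) := by
  obtain ⟨p, hp, hlt⟩ := exists_mem_forall_upCount_lt hle hcard
  obtain ⟨q, hq, hqp, hmin⟩ := exists_minimal_ple hp
  refine ⟨q, hq, hmin, rpLE_iff.2 fun a ha => ?_⟩
  by_cases haq : Ple a q
  · have herase := upCount_erase_add_one hq haq
    have hstrict := hlt a (haq.trans hqp) ha
    omega
  · rw [upCount_erase_of_not_ple haq]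
    exact rpLE_iff.1 hle a ha

theorem ple_of_rpLE_erase (hq' : q' ∈ D) (hq'diag : q'.2 < q'.1)
    (h : rpLE (D.erase q) (D.erase q')) : Ple q' q := by
  by_contra hnot
  have hle := rpLE_iff.1 h q' hq'diag
  rw [upCount_erase_of_not_ple hnot] at hle
  have herase := upCount_erase_add_one hq' (Ple.refl q')
  omega

end erase

/-- Lemma 3.8: `L̃⁻(D) = Ñ⁻(D)` for every rook placement `D`. -/
theorem ltilde_eq_ntilde (n : ℕ) (D : Finset (ℕ × ℕ)) (hD : IsRP n D) :
    ∀ T : Finset (ℕ × ℕ),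
      (IsRP n T ∧ rpLT T D ∧ T.card < D.card ∧
        ∀ S, IsRP n S → rpLE T S → rpLT S D → S.card < D.card → S = T) ↔
      (∃ i j, (i, j) ∈ D ∧ (∀ q ∈ D, Ple q (i, j) → q = (i, j)) ∧
        T = D.erase (i, j)) := by
  intro T
  constructor
  · rintro ⟨-, hTD, hcard, hmax⟩
    obtain ⟨q, hq, hmin, hTq⟩ := exists_minimal_rpLE_erase hTD.1 hcard
    exact ⟨q.1, q.2, hq, hmin,
      (hmax _ (hD.erase q) hTq (erase_rpLT hq) (card_erase_lt_of_mem hq)).symm⟩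
  · rintro ⟨i, j, hij, hmin, rfl⟩
    refine ⟨hD.erase _, erase_rpLT hij, card_erase_lt_of_mem hij, fun S hS hTS hSD hcard => ?_⟩
    obtain ⟨q, hq, -, hSq⟩ := exists_minimal_rpLE_erase hSD.1 hcard
    obtain rfl := hmin q hq (ple_of_rpLE_erase hq (mem_PhiPos_s14 (hD.1 hq)).2 (hTS.trans hSq))
    exact rpLE_antisymm hS.1 (hD.erase _).1 hSq hTS
end
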